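/- Fix s ≥ s₀ and suppose M(s) := sup_{a∈ℝ^N} ∫_B ρ(z)^α θ_a(s,z)² dz is finite, and let a₀ ∈ ℝ^N satisfy ∫_B ρ(z)^α θ_{a₀}(s,z)² dz ≥ M(s)/2. Then there exists a constant C depending only on N and α such that for every a ∈ ℝ^N: ∫_B θ_a(s,z)² dz ≤ C ∫_B ρ(z)^α θ_{a₀}(s,z)² dz. -/
import Mathlib


open MeasureTheory Real Set

noncomputable section

/-- Euclidean space `ℝ^N`. -/
abbrev Euc (N : ℕ) : Type := EuclideanSpace ℝ (Fin N)

/-- The weight `ρ(z) = 1 - |z|²`. -/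
def rho {N : ℕ} (z : Euc N) : ℝ := 1 - ‖z‖ ^ 2

/-- A nonnegative function's integral over a set is at most the sum of its integrals over
the pieces of a finite cover. -/
lemma setIntegral_le_sum_cover {X : Type*} [MeasurableSpace X] (μ : Measure X)
    {ι : Type*} (t : Finset ι) (u : ι → Set X) (s : Set X)
    (hs : s ⊆ ⋃ i ∈ t, u i) (f : X → ℝ) (hf : ∀ x, 0 ≤ f x)
    (hint : ∀ i, IntegrableOn f (u i ∩ s) μ) :
    ∫ x in s, f x ∂μ ≤ ∑ i ∈ t, ∫ x in u i ∩ s, f x ∂μ := by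
  have hcover : s ⊆ ⋃ i : t, (u i ∩ s) := by
    intro x hx
    obtain ⟨i, hi, hxi⟩ := mem_iUnion₂.1 (hs hx)
    exact mem_iUnion.2 ⟨⟨i, hi⟩, hxi, hx⟩
  have hle : μ.restrict s ≤ ∑ i ∈ t, μ.restrict (u i ∩ s) := by
    calc μ.restrict s ≤ μ.restrict (⋃ i : t, (u i ∩ s)) :=
          Measure.restrict_mono hcover le_rfl
    _ ≤ Measure.sum (fun i : t => μ.restrict (u i ∩ s)) := Measure.restrict_iUnion_le
    _ = ∑ i ∈ t, μ.restrict (u i ∩ s) := by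
        rw [Measure.sum_fintype]; exact Finset.sum_coe_sort t (fun i => μ.restrict (u i ∩ s))
  have hintν : Integrable f (∑ i ∈ t, μ.restrict (u i ∩ s)) :=
    integrable_finset_sum_measure.2 fun i _ => hint i
  calc ∫ x in s, f x ∂μ ≤ ∫ x, f x ∂(∑ i ∈ t, μ.restrict (u i ∩ s)) :=
        integral_mono_measure hle (Filter.Eventually.of_forall hf) hintν
  _ = ∑ i ∈ t, ∫ x in u i ∩ s, f x ∂μ := integral_finset_sum_measure fun i _ => hint i

/-- if `a₀` nearly realizes the supremum `M(s)` of the weighted `L²` norms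
`∫_B ρ^α θ_a(s)²` over `a ∈ ℝ^N`, then there is a constant `C = C(N,α)` such that for
every `a`, `∫_B θ_a(s)² ≤ C ∫_B ρ^α θ_{a₀}(s)²`. -/
theorem local_L2_covering_bound (N : ℕ) (hN : 1 ≤ N) (α : ℝ) (hα : 0 ≤ α) :
    ∃ C : ℝ, 0 < C ∧
      ∀ (s₀ : ℝ) (θ : Euc N → ℝ → Euc N → ℝ),
        (∀ a : Euc N,
          ContinuousOn (fun q : ℝ × Euc N => θ a q.1 q.2) (Set.Ici s₀ ×ˢ Set.univ)) →
        (∀ (a z₀ z : Euc N), ∀ s ≥ s₀, θ a s (z₀ + z) = θ (a + z₀) s z) →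
        ∀ s ≥ s₀,
          BddAbove (Set.range fun a : Euc N =>
            ∫ z in Metric.ball (0 : Euc N) 1, rho z ^ α * (θ a s z) ^ 2) →
          ∀ a₀ : Euc N,
            (⨆ a : Euc N, ∫ z in Metric.ball (0 : Euc N) 1, rho z ^ α * (θ a s z) ^ 2) / 2
              ≤ ∫ z in Metric.ball (0 : Euc N) 1, rho z ^ α * (θ a₀ s z) ^ 2 →
            ∀ a : Euc N,
              (∫ z in Metric.ball (0 : Euc N) 1, (θ a s z) ^ 2)
                ≤ C * ∫ z in Metric.ball (0 : Euc N) 1, rho z ^ α * (θ a₀ s z) ^ 2 := by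
  -- Finite cover of the closed unit ball by balls of radius 1/2
  obtain ⟨t, hcov⟩ := (isCompact_closedBall (0 : Euc N) 1).elim_finite_subcover
    (fun c : Euc N => Metric.ball c (1/2)) (fun c => Metric.isOpen_ball)
    (fun x _ => mem_iUnion.2 ⟨x, Metric.mem_ball_self (by norm_num)⟩)
  have h43 : (0:ℝ) < (4/3 : ℝ) ^ α := Real.rpow_pos_of_pos (by norm_num) α
  refine ⟨2 * (t.card + 1) * (4/3 : ℝ) ^ α, by positivity, ?_⟩
  intro s₀ θ hcont htrans s hs hbdd a₀ ha₀ a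
  set B : Set (Euc N) := Metric.ball (0 : Euc N) 1 with hB
  set I₀ : ℝ := ∫ z in B, rho z ^ α * (θ a₀ s z) ^ 2 with hI₀def
  -- basic facts
  have hrho_cont : Continuous (fun z : Euc N => rho z ^ α) :=
    ((continuous_const.sub ((continuous_norm).pow 2)) : Continuous (rho (N := N))).rpow_const
      (fun _ => Or.inr hα)
  have hθc : ∀ b : Euc N, Continuous (fun z => θ b s z) := by
    intro b
    exact (hcont b).comp_continuous (continuous_const.prodMk continuous_id)
      (fun z => ⟨hs, mem_univ z⟩)
  have hInt : ∀ (f : Euc N → ℝ), Continuous f → ∀ (c : Euc N) (r : ℝ),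
      IntegrableOn f (Metric.ball c r) := by
    intro f hf c r
    exact (hf.locallyIntegrable.integrableOn_isCompact (isCompact_closedBall c r)).mono_set
      Metric.ball_subset_closedBall
  have hrho_nonneg : ∀ z ∈ B, 0 ≤ rho z := by
    intro z hz
    have : ‖z‖ < 1 := by simpa [B, Metric.mem_ball, dist_eq_norm] using hz
    have h0 := norm_nonneg z
    simp only [rho]; nlinarith
  have hI₀nonneg : 0 ≤ I₀ :=
    setIntegral_nonneg measurableSet_ball fun z hz =>
      mul_nonneg (Real.rpow_nonneg (hrho_nonneg z hz) α) (sq_nonneg _)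
  have hM : (⨆ b : Euc N, ∫ z in B, rho z ^ α * (θ b s z) ^ 2) ≤ 2 * I₀ := by
    rw [hI₀def] at ha₀ ⊢
    linarith [ha₀]
  -- key estimate for each ball in the cover
  have key : ∀ c : Euc N,
      ∫ z in Metric.ball c (1/2) ∩ B, (θ a s z) ^ 2 ≤ (4/3 : ℝ) ^ α * (2 * I₀) := by
    intro c
    have hint_half : IntegrableOn (fun z => (θ a s z) ^ 2) (Metric.ball c (1/2)) :=
      hInt _ ((hθc a).pow 2) c (1/2)
    have step1 : ∫ z in Metric.ball c (1/2) ∩ B, (θ a s z) ^ 2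
        ≤ ∫ z in Metric.ball c (1/2), (θ a s z) ^ 2 :=
      setIntegral_mono_set hint_half
        (Filter.Eventually.of_forall fun z => sq_nonneg _)
        (HasSubset.Subset.eventuallyLE inter_subset_left)
    -- change of variables z ↦ c + z
    have hmp : MeasurePreserving (fun z : Euc N => c + z) volume volume :=
      measurePreserving_add_left volume c
    have hemb : MeasurableEmbedding (fun z : Euc N => c + z) :=
      (MeasurableEquiv.addLeft c).measurableEmbedding
    have hpre : (fun z : Euc N => c + z) ⁻¹' Metric.ball c (1/2) = Metric.ball 0 (1/2) := by
      ext z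
      simp [Metric.mem_ball, dist_eq_norm, add_sub_cancel_left]
    have step2 : ∫ z in Metric.ball c (1/2), (θ a s z) ^ 2
        = ∫ z in Metric.ball (0 : Euc N) (1/2), (θ (a + c) s z) ^ 2 := by
      rw [← hmp.setIntegral_preimage_emb hemb (fun z => (θ a s z) ^ 2) (Metric.ball c (1/2)),
        hpre]
      refine setIntegral_congr_fun measurableSet_ball fun z _ => ?_
      rw [htrans a c z s hs]
    -- weight comparison on the half ball
    have hg_cont : Continuous (fun z : Euc N => rho z ^ α * (θ (a + c) s z) ^ 2) :=
      hrho_cont.mul ((hθc (a + c)).pow 2)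
    have step3 : ∫ z in Metric.ball (0 : Euc N) (1/2), (θ (a + c) s z) ^ 2
        ≤ ∫ z in Metric.ball (0 : Euc N) (1/2),
            (4/3 : ℝ) ^ α * (rho z ^ α * (θ (a + c) s z) ^ 2) := by
      refine setIntegral_mono_on (hInt _ ((hθc (a + c)).pow 2) 0 (1/2))
        (hInt _ (continuous_const.mul hg_cont) 0 (1/2))
        measurableSet_ball fun z hz => ?_
      have hz' : ‖z‖ < 1/2 := by simpa [Metric.mem_ball, dist_eq_norm] using hz
      have hρ : (3/4 : ℝ) ≤ rho z := by
        have h0 := norm_nonneg z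
        simp only [rho]; nlinarith
      have h1 : (3/4 : ℝ) ^ α ≤ rho z ^ α :=
        Real.rpow_le_rpow (by norm_num) hρ hα
      have h2 : (1 : ℝ) ≤ (4/3 : ℝ) ^ α * rho z ^ α := by
        calc (1 : ℝ) = ((4/3 : ℝ) * (3/4 : ℝ)) ^ α := by norm_num
        _ = (4/3 : ℝ) ^ α * (3/4 : ℝ) ^ α := Real.mul_rpow (by norm_num) (by norm_num)
        _ ≤ (4/3 : ℝ) ^ α * rho z ^ α := by
            exact mul_le_mul_of_nonneg_left h1 (le_of_lt h43)
      calc (θ (a + c) s z) ^ 2 = 1 * (θ (a + c) s z) ^ 2 := (one_mul _).symm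
      _ ≤ ((4/3 : ℝ) ^ α * rho z ^ α) * (θ (a + c) s z) ^ 2 :=
          mul_le_mul_of_nonneg_right h2 (sq_nonneg _)
      _ = (4/3 : ℝ) ^ α * (rho z ^ α * (θ (a + c) s z) ^ 2) := by ring
    have step4 : ∫ z in Metric.ball (0 : Euc N) (1/2), rho z ^ α * (θ (a + c) s z) ^ 2
        ≤ ∫ z in B, rho z ^ α * (θ (a + c) s z) ^ 2 := by
      refine setIntegral_mono_set (hInt _ hg_cont 0 1) ?_
        (HasSubset.Subset.eventuallyLE (Metric.ball_subset_ball (by norm_num)))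
      exact (ae_restrict_iff' measurableSet_ball).2
        (Filter.Eventually.of_forall fun z hz =>
          mul_nonneg (Real.rpow_nonneg (hrho_nonneg z hz) α) (sq_nonneg _))
    have step5 : ∫ z in B, rho z ^ α * (θ (a + c) s z) ^ 2 ≤ 2 * I₀ :=
      le_trans (le_ciSup hbdd (a + c)) hM
    calc ∫ z in Metric.ball c (1/2) ∩ B, (θ a s z) ^ 2
        ≤ ∫ z in Metric.ball c (1/2), (θ a s z) ^ 2 := step1
    _ = ∫ z in Metric.ball (0 : Euc N) (1/2), (θ (a + c) s z) ^ 2 := step2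
    _ ≤ ∫ z in Metric.ball (0 : Euc N) (1/2),
          (4/3 : ℝ) ^ α * (rho z ^ α * (θ (a + c) s z) ^ 2) := step3
    _ = (4/3 : ℝ) ^ α * ∫ z in Metric.ball (0 : Euc N) (1/2),
          rho z ^ α * (θ (a + c) s z) ^ 2 := integral_const_mul _ _
    _ ≤ (4/3 : ℝ) ^ α * (2 * I₀) := mul_le_mul_of_nonneg_left (step4.trans step5) (le_of_lt h43)
  -- sum over the cover
  have hsub : B ⊆ ⋃ c ∈ t, Metric.ball c (1/2) :=
    fun x hx => hcov (Metric.ball_subset_closedBall hx)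
  have hsum : ∫ z in B, (θ a s z) ^ 2
      ≤ ∑ c ∈ t, ∫ z in Metric.ball c (1/2) ∩ B, (θ a s z) ^ 2 :=
    setIntegral_le_sum_cover volume t _ B hsub _ (fun z => sq_nonneg _)
      (fun c => (hInt _ ((hθc a).pow 2) c (1/2)).mono_set inter_subset_left)
  calc ∫ z in B, (θ a s z) ^ 2
      ≤ ∑ c ∈ t, ∫ z in Metric.ball c (1/2) ∩ B, (θ a s z) ^ 2 := hsum
  _ ≤ ∑ _c ∈ t, (4/3 : ℝ) ^ α * (2 * I₀) := Finset.sum_le_sum fun c _ => key c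
  _ = t.card * ((4/3 : ℝ) ^ α * (2 * I₀)) := by rw [Finset.sum_const, nsmul_eq_mul]
  _ ≤ 2 * (t.card + 1) * (4/3 : ℝ) ^ α * I₀ := by nlinarith [hI₀nonneg, h43, Nat.cast_nonneg (α := ℝ) t.card]
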